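/- arXiv:1707.09793 — 3 statements merged into one kernel-verified Lean document; each statement's English description precedes it below -/
import Mathlib

section
/- (Interchange Lemma) Let M be a k-permutable monoid and let L ∈ 𝔏_Rat(M). Then there exists a positive integer m such that for every word w ∈ L and every factorization w = w₁w₂⋯w_m with |wᵢ| ≥ 1 for 1 ≤ i ≤ m, there exist integers 0 ≤ i₀ < i₁ < ⋯ < i_k ≤ m such that, setting λ = w₁⋯w_{i₀}, W_j = w_{i_{j-1}+1}⋯w_{i_j} for j = 1,…,k, and μ = w_{i_k+1}⋯w_m (with λ = ε when i₀ = 0 and μ = ε when i_k = m), there is a permutation σ of {1,…,k} different from the identity for which the word w_σ = λ W_{σ(1)} W_{σ(2)} ⋯ W_{σ(k)} μ belongs to L. -/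
open scoped Pointwise

/-- A semigroup/monoid `M` is `n`-permutable: for every sequence of `n` elements there is a
non-identity permutation `σ` of `{1,…,n}` leaving the product unchanged. -/
def NPermutable (M : Type) [Monoid M] (n : ℕ) : Prop :=
  ∀ s : Fin n → M, ∃ σ : Equiv.Perm (Fin n), σ ≠ 1 ∧
    (List.ofFn s).prod = (List.ofFn fun i => s (σ i)).prod

/-- `M` is permutable if it is `n`-permutable for some `n ≥ 2`. -/
def Permutable (M : Type) [Monoid M] : Prop :=
  ∃ n : ℕ, 2 ≤ n ∧ NPermutable M n

/-- `M` is an inverse monoid: every element has a unique inverse in the sense of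
inverse semigroup theory. -/
def IsInverseMonoid (M : Type) [Monoid M] : Prop :=
  ∀ m : M, ∃! m' : M, m * m' * m = m ∧ m' * m * m' = m'

/-- The rational subsets of a monoid: the closure of the finite subsets under
union, (pointwise) product and Kleene star (i.e. generated submonoid). -/
inductive IsRatSet {M : Type} [Monoid M] : Set M → Prop
  | of_finite (S : Set M) : S.Finite → IsRatSet S
  | union (S T : Set M) : IsRatSet S → IsRatSet T → IsRatSet (S ∪ T)
  | mul (S T : Set M) : IsRatSet S → IsRatSet T → IsRatSet (S * T)
  | star (S : Set M) : IsRatSet S → IsRatSet (Submonoid.closure S : Set M)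

/-- A rational monoid automaton over `M` with input alphabet `α`: a nondeterministic
finite automaton whose transitions (on letters or on `ε`, encoded by `none`) are labeled
by elements of `M`, together with rational initial and terminal sets `I0, I1 ⊆ M`. -/
structure RatMonoidAutomaton (α : Type) (M : Type) [Monoid M] where
  Q : Type
  fintypeQ : Fintype Q
  start : Q
  accept : Set Q
  step : Q → Option α → Set (Q × M)
  I0 : Set M
  I1 : Set M
  ratI0 : IsRatSet I0
  ratI1 : IsRatSet I1

namespace RatMonoidAutomaton

variable {α M : Type} [Monoid M]

/-- `A.Reaches q w m q'` holds if there is a computation of `A` from state `q` to state `q'`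
reading the word `w` (with `ε`-moves allowed) whose product of labels is `m`. -/
inductive Reaches (A : RatMonoidAutomaton α M) : A.Q → List α → M → A.Q → Prop
  | refl (q : A.Q) : Reaches A q [] 1 q
  | letter {q q' q'' : A.Q} {a : α} {w : List α} {m m' : M} :
      (q', m) ∈ A.step q (some a) → Reaches A q' w m' q'' →
      Reaches A q (a :: w) (m * m') q''
  | eps {q q' q'' : A.Q} {w : List α} {m m' : M} :
      (q', m) ∈ A.step q none → Reaches A q' w m' q'' →
      Reaches A q w (m * m') q''

/-- The language accepted by a rational monoid automaton: `w` is accepted if some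
computation on `w` from the initial state to an accepting state has label product `x`
with `x₀ * x ∈ I1` for some `x₀ ∈ I0`. -/
def lang (A : RatMonoidAutomaton α M) : Language α :=
  { w | ∃ q ∈ A.accept, ∃ m : M, A.Reaches A.start w m q ∧ ∃ x0 ∈ A.I0, x0 * m ∈ A.I1 }

end RatMonoidAutomaton

/-- `𝔏_Rat(M)`: the family of languages over the alphabet `α` accepted by rational
monoid automata over `M`. -/
def LRat (α : Type) (M : Type) [Monoid M] : Set (Language α) :=
  { L | ∃ A : RatMonoidAutomaton α M, A.lang = L }

/-! The run of the automaton on `w₁⋯w_m` passes through a state at each of the `m + 1` cut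
points; for `m = k·|Q|` some state `s` occurs at `k + 1` of them, so the `k` blocks between
consecutive such cut points label loops at `s`. Reading these loops in any order is again a
run to the same accepting state, labelled by the product of the loop labels in that order, and
`k`-permutability of `M` provides a non-identity order with an unchanged product, hence an
unchanged acceptance condition `x₀ x ∈ I₁`. -/

theorem exists_strictMono_fin_apply_eq {Q : Type*} [Fintype Q] (p : ℕ → Q) (k : ℕ) :
    ∃ f : Fin (k + 1) → ℕ, StrictMono f ∧ f (Fin.last k) ≤ k * Fintype.card Q ∧
      ∃ s, ∀ j, p (f j) = s := by
  classical
  obtain ⟨s, -, hs⟩ := Finset.exists_lt_card_fiber_of_mul_lt_card_of_maps_to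
    (s := Finset.range (k * Fintype.card Q + 1)) (t := Finset.univ) (f := p) (n := k)
    (fun _ _ => Finset.mem_univ _) (by simp [Nat.mul_comm])
  obtain ⟨t, hts, htk⟩ := Finset.exists_subset_card_eq hs
  refine ⟨t.orderEmbOfFin htk, (t.orderEmbOfFin htk).strictMono, ?_, s, fun j => ?_⟩
  · have := hts (t.orderEmbOfFin_mem htk (Fin.last k))
    simp only [Finset.mem_filter, Finset.mem_range] at this
    omega
  · exact (Finset.mem_filter.mp (hts (t.orderEmbOfFin_mem htk j))).2

section IcoProd

variable {M : Type} [Monoid M] (x : ℕ → M)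

theorem prod_map_Ico_mul_prod_map_Ico {i j l : ℕ} (hij : i ≤ j) (hjl : j ≤ l) :
    ((List.Ico i j).map x).prod * ((List.Ico j l).map x).prod = ((List.Ico i l).map x).prod := by
  rw [← List.prod_append, ← List.map_append, List.Ico.append_consecutive hij hjl]

theorem prod_ofFn_prod_map_Ico {k : ℕ} (g : Fin (k + 1) → ℕ) (hg : Monotone g) :
    (List.ofFn fun j : Fin k => ((List.Ico (g j.castSucc) (g j.succ)).map x).prod).prod =
      ((List.Ico (g 0) (g (Fin.last k))).map x).prod := by
  induction k with
  | zero => simp [Fin.last_zero, List.Ico.self_empty]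
  | succ k ih =>
    rw [List.ofFn_succ, List.prod_cons]
    have htail := ih (fun j => g j.succ) (hg.comp fun _ _ => Fin.succ_le_succ_iff.mpr)
    simp only [Fin.succ_castSucc, Fin.succ_last] at htail
    rw [htail]
    exact prod_map_Ico_mul_prod_map_Ico x (hg (Fin.zero_le _)) (hg (Fin.le_last _))

end IcoProd

namespace RatMonoidAutomaton

variable {α M : Type} [Monoid M] {A : RatMonoidAutomaton α M}

theorem Reaches.append {q q' q'' : A.Q} {u v : List α} {m₁ m₂ : M}
    (h₁ : A.Reaches q u m₁ q') (h₂ : A.Reaches q' v m₂ q'') :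
    A.Reaches q (u ++ v) (m₁ * m₂) q'' := by
  induction h₁ with
  | refl => simpa using h₂
  | letter hs _ ih => rw [List.cons_append, mul_assoc]; exact .letter hs (ih h₂)
  | eps hs _ ih => rw [mul_assoc]; exact .eps hs (ih h₂)

theorem Reaches.exists_of_append {q q'' : A.Q} {u v : List α} {m : M}
    (h : A.Reaches q (u ++ v) m q'') :
    ∃ q' m₁ m₂, m = m₁ * m₂ ∧ A.Reaches q u m₁ q' ∧ A.Reaches q' v m₂ q'' := by
  generalize hw : u ++ v = w at h
  induction h generalizing u with
  | refl q =>
    obtain ⟨rfl, rfl⟩ := List.append_eq_nil_iff.mp hw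
    exact ⟨q, 1, 1, (one_mul 1).symm, .refl q, .refl q⟩
  | letter hs hr ih =>
    cases u with
    | nil => exact ⟨_, 1, _, (one_mul _).symm, .refl _, (List.nil_append v ▸ hw) ▸ .letter hs hr⟩
    | cons b u =>
      rw [List.cons_append, List.cons.injEq] at hw
      obtain ⟨rfl, hw⟩ := hw
      obtain ⟨q', m₁, m₂, rfl, h₁, h₂⟩ := ih hw
      exact ⟨q', _, m₂, (mul_assoc _ _ _).symm, .letter hs h₁, h₂⟩
  | eps hs hr ih =>
    obtain ⟨q', m₁, m₂, rfl, h₁, h₂⟩ := ih hw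
    exact ⟨q', _, m₂, (mul_assoc _ _ _).symm, .eps hs h₁, h₂⟩

theorem Reaches.flatten_map {ι : Type*} {q : A.Q} {W : ι → List α} {c : ι → M}
    (h : ∀ i, A.Reaches q (W i) (c i) q) (l : List ι) :
    A.Reaches q (l.map W).flatten (l.map c).prod q := by
  induction l with
  | nil => exact .refl q
  | cons i l ih => simpa using (h i).append ih

theorem Reaches.exists_factor_runs {q q' : A.Q} {ws : List (List α)} {m : M}
    (h : A.Reaches q ws.flatten m q') :
    ∃ (p : ℕ → A.Q) (x : ℕ → M) (e : M), p 0 = q ∧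
      m = ((List.range ws.length).map x).prod * e ∧ A.Reaches (p ws.length) [] e q' ∧
      ∀ i (hi : i < ws.length), A.Reaches (p i) ws[i] (x i) (p (i + 1)) := by
  induction ws generalizing q m with
  | nil => exact ⟨fun _ => q, fun _ => 1, m, rfl, by simp, h, fun _ hi => absurd hi (by simp)⟩
  | cons w ws ih =>
    obtain ⟨q₁, m₁, m₂, rfl, h₁, h₂⟩ := Reaches.exists_of_append (List.flatten_cons ▸ h)
    obtain ⟨p, x, e, rfl, rfl, he, hsteps⟩ := ih h₂
    refine ⟨fun | 0 => q | i + 1 => p i, fun | 0 => m₁ | i + 1 => x i, e, rfl, ?_, he, ?_⟩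
    · rw [List.length_cons, List.prod_range_succ', mul_assoc]
    · rintro (_ | i) hi
      · exact h₁
      · exact hsteps i (Nat.succ_lt_succ_iff.mp hi)

theorem Reaches.flatten_drop_take {p : ℕ → A.Q} {x : ℕ → M} {ws : List (List α)}
    (hsteps : ∀ i (hi : i < ws.length), A.Reaches (p i) ws[i] (x i) (p (i + 1)))
    {i j : ℕ} (hij : i ≤ j) (hj : j ≤ ws.length) :
    A.Reaches (p i) ((ws.take j).drop i).flatten ((List.Ico i j).map x).prod (p j) := by
  induction j, hij using Nat.le_induction with
  | base => simpa [List.Ico.self_empty] using Reaches.refl (p i)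
  | succ j hij ih =>
    have hj' : j < ws.length := hj
    rw [← List.take_append_getElem hj', List.drop_append_of_le_length (by simp; omega),
      List.Ico.succ_top hij, List.map_append, List.prod_append, List.flatten_append]
    simpa using (ih hj'.le).append (hsteps j hj')

theorem Reaches.exists_loops_of_mul_card_le [Fintype A.Q] {q q' : A.Q} {ws : List (List α)}
    {m : M} {k : ℕ} (hlen : k * Fintype.card A.Q ≤ ws.length)
    (h : A.Reaches q ws.flatten m q') :
    ∃ f : Fin (k + 1) → ℕ, StrictMono f ∧ f (Fin.last k) ≤ ws.length ∧
      ∃ (s : A.Q) (a b : M) (c : Fin k → M), m = a * (List.ofFn c).prod * b ∧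
        A.Reaches q (ws.take (f 0)).flatten a s ∧
        (∀ j, A.Reaches s ((ws.take (f j.succ)).drop (f j.castSucc)).flatten (c j) s) ∧
        A.Reaches s (ws.drop (f (Fin.last k))).flatten b q' := by
  obtain ⟨p, x, e, rfl, rfl, he, hsteps⟩ := h.exists_factor_runs
  obtain ⟨f, hf, hfk, s, hs⟩ := exists_strictMono_fin_apply_eq p k
  have hle : ∀ j, f j ≤ ws.length :=
    fun j => (hf.monotone (Fin.le_last j)).trans (hfk.trans hlen)
  refine ⟨f, hf, hle _, s, ((List.Ico 0 (f 0)).map x).prod,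
    ((List.Ico (f (Fin.last k)) ws.length).map x).prod * e,
    fun j => ((List.Ico (f j.castSucc) (f j.succ)).map x).prod, ?_, ?_, fun j => ?_, ?_⟩
  · rw [prod_ofFn_prod_map_Ico x f hf.monotone, ← mul_assoc,
      prod_map_Ico_mul_prod_map_Ico x (Nat.zero_le _) (hf.monotone (Fin.zero_le _)),
      prod_map_Ico_mul_prod_map_Ico x (Nat.zero_le _) (hle _), List.Ico.zero_bot]
  · simpa [hs] using Reaches.flatten_drop_take hsteps (Nat.zero_le (f 0)) (hle 0)
  · simpa [hs] using
      Reaches.flatten_drop_take hsteps (hf.monotone (Fin.castSucc_le_succ j)) (hle _)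
  · simpa [hs] using (Reaches.flatten_drop_take hsteps (hle (Fin.last k)) le_rfl).append he

end RatMonoidAutomaton

/-- **Interchange Lemma.** Let `M` be a `k`-permutable monoid and
`L ∈ 𝔏_Rat(M)`. Then there is a positive integer `m` such that for every word of `L`
factorized as `w = w₁w₂⋯w_m` into `m` nonempty factors (given by the list `ws`), there
are indices `0 ≤ i₀ < i₁ < ⋯ < i_k ≤ m` (given by the strictly monotone `f`) such that,
setting `λ = w₁⋯w_{i₀}`, `W_j = w_{i_{j-1}+1}⋯w_{i_j}` and `μ = w_{i_k+1}⋯w_m`, some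
non-identity permutation `σ` of `{1,…,k}` yields `λ W_{σ(1)} ⋯ W_{σ(k)} μ ∈ L`. -/
theorem interchange_lemma
    (M : Type) [Monoid M] (k : ℕ) (hk : 2 ≤ k) (hperm : NPermutable M k)
    (α : Type) (L : Language α) (hL : L ∈ LRat α M) :
    ∃ m : ℕ, 0 < m ∧
      ∀ ws : List (List α), ws.length = m → (∀ u ∈ ws, u ≠ []) → ws.flatten ∈ L →
        ∃ f : Fin (k + 1) → ℕ, StrictMono f ∧ f (Fin.last k) ≤ m ∧
          ∃ σ : Equiv.Perm (Fin k), σ ≠ 1 ∧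
            (ws.take (f 0)).flatten ++
                (List.ofFn fun j : Fin k =>
                  ((ws.take (f (σ j).succ)).drop (f (σ j).castSucc)).flatten).flatten ++
              (ws.drop (f (Fin.last k))).flatten ∈ L := by
  obtain ⟨A, rfl⟩ := hL
  let _ := A.fintypeQ
  have : Nonempty A.Q := ⟨A.start⟩
  refine ⟨k * Fintype.card A.Q, Nat.mul_pos (by omega) Fintype.card_pos, ?_⟩
  rintro ws hlen - ⟨q, hq, m, hrun, x₀, hx₀, hm⟩
  obtain ⟨f, hf, hfn, s, a, b, c, rfl, hpre, hloop, hsuf⟩ :=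
    hrun.exists_loops_of_mul_card_le hlen.ge
  obtain ⟨σ, hσ, hc⟩ := hperm c
  refine ⟨f, hf, hlen ▸ hfn, σ, hσ, q, hq, a * (List.ofFn fun j => c (σ j)).prod * b, ?_, x₀,
    hx₀, ?_⟩
  · have hmid := RatMonoidAutomaton.Reaches.flatten_map hloop (List.ofFn σ)
    simpa [List.map_ofFn, Function.comp_def] using (hpre.append hmid).append hsuf
  · rwa [← hc]
end

section
/- Let M be a finitely generated permutable monoid. Then the language L₁* = ({aⁿbⁿ : n ≥ 1})* over the alphabet {a, b} does not belong to 𝔏_Rat(M). -/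
open scoped Pointwise

/-- The language `L₁ = {aⁿbⁿ : n ≥ 1}` over the two-letter alphabet `Fin 2`
(where `a = 0` and `b = 1`). -/
def LangL1 : Language (Fin 2) :=
  { w | ∃ n : ℕ, 1 ≤ n ∧ w = List.replicate n 0 ++ List.replicate n 1 }

/-!
Take `K = |Q|·n`, where `M` is `n`-permutable and `Q` is the state set of the automaton, and feed it
the word `a¹b¹a²b²⋯a^{K+1}b^{K+1} ∈ L₁*`, cut as `a · (b¹a²)(b²a³)⋯(b^K a^{K+1}) · b^{K+1}`.
By pigeonhole, an accepting run is in the same state `y` at `n + 1` of the `K + 1` cuts, so the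
word between consecutive ones of these cuts is read by `n` loops at `y`. Permutability rearranges
their labels by some `σ ≠ 1` without changing the product, so the word with the loops rearranged
by `σ` is accepted as well. But a word of `L₁*` of this shape determines the order of its pieces
`bᵗ⁺¹aᵗ⁺²`, since each `a`-run must be matched by the following `b`-run, and this forces `σ = 1`.
-/

theorem List.replicate_append_inj {α : Type*} {x : α} {m p : ℕ} {A B : List α}
    (hA : A.head? ≠ some x) (hB : B.head? ≠ some x)
    (h : replicate m x ++ A = replicate p x ++ B) : m = p ∧ A = B := by
  induction m generalizing p <;> cases p <;> simp_all [replicate_succ]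
  simp [← h] at hB

theorem Equiv.Perm.eq_one_of_strictMono {n : ℕ} {σ : Equiv.Perm (Fin n)} (hσ : StrictMono σ) :
    σ = 1 :=
  Equiv.ext (congrFun ((hσ.range_inj strictMono_id).1 (by simp)))

theorem exists_strictMono_fin_of_card_mul_lt {β : Type*} [Fintype β] (f : ℕ → β) {n K : ℕ}
    (h : Fintype.card β * n < K + 1) :
    ∃ y, ∃ d : Fin (n + 1) → ℕ, StrictMono d ∧ (∀ j, d j ≤ K) ∧ ∀ j, f (d j) = y := by
  classical
  obtain ⟨y, -, hy⟩ := Finset.exists_lt_card_fiber_of_mul_lt_card_of_maps_to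
    (s := Finset.range (K + 1)) (t := Finset.univ) (f := f) (fun _ _ => Finset.mem_univ _)
    (by simpa using h)
  obtain ⟨T, hT, hTcard⟩ := Finset.exists_subset_card_eq (Nat.succ_le_of_lt hy)
  have hmem (j : Fin (n + 1)) := Finset.mem_filter.1 (hT (T.orderEmbOfFin_mem hTcard j))
  exact ⟨y, T.orderEmbOfFin hTcard, (T.orderEmbOfFin hTcard).strictMono,
    fun j => Nat.lt_succ_iff.1 (Finset.mem_range.1 (hmem j).1), fun j => (hmem j).2⟩

section PermuteBlocks

variable {n : ℕ}

def blockRange (d : Fin (n + 1) → ℕ) (j : Fin n) : List ℕ :=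
  List.range' (d j.castSucc) (d j.succ - d j.castSucc)

def permuteBlocks (K : ℕ) (d : Fin (n + 1) → ℕ) (σ : Equiv.Perm (Fin n)) : List ℕ :=
  List.range' 0 (d 0) ++ (List.ofFn (blockRange d ∘ σ)).flatten ++
    List.range' (d (Fin.last n)) (K - d (Fin.last n))

theorem flatten_ofFn_blockRange {d : Fin (n + 1) → ℕ} (hd : Monotone d) :
    (List.ofFn (blockRange d)).flatten = List.range' (d 0) (d (Fin.last n) - d 0) := by
  induction n with
  | zero => simp
  | succ n ih =>
    have h01 := hd (Fin.zero_le 1)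
    have h1n := hd (Fin.le_last 1)
    have ih' : (List.ofFn fun j => blockRange d j.succ).flatten =
        List.range' (d 1) (d (Fin.last (n + 1)) - d 1) :=
      ih (d := fun j => d j.succ) (hd.comp Fin.strictMono_succ.monotone)
    obtain ⟨x, hx⟩ := Nat.exists_eq_add_of_le h01
    rw [List.ofFn_succ, List.flatten_cons, ih', blockRange, Fin.castSucc_zero,
      Fin.succ_zero_eq_one, hx, Nat.add_sub_cancel_left, List.range'_append_1]
    congr 1
    omega

theorem permuteBlocks_one {K : ℕ} {d : Fin (n + 1) → ℕ} (hd : Monotone d)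
    (hK : d (Fin.last n) ≤ K) : permuteBlocks K d 1 = List.range' 0 K := by
  have h0 := hd (Fin.zero_le (Fin.last n))
  have hsplit : K = d 0 + (d (Fin.last n) - d 0 + (K - d (Fin.last n))) := by omega
  conv_rhs => rw [hsplit, ← List.range'_append_1, ← List.range'_append_1]
  rw [permuteBlocks, Equiv.Perm.coe_one, Function.comp_id, flatten_ofFn_blockRange hd,
    List.append_assoc, zero_add, Nat.add_sub_cancel' h0]

theorem eq_one_of_pairwise_permuteBlocks {K : ℕ} {d : Fin (n + 1) → ℕ} (hd : StrictMono d)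
    {σ : Equiv.Perm (Fin n)} (h : (permuteBlocks K d σ).Pairwise (· < ·)) : σ = 1 := by
  have hblocks := (List.pairwise_flatten.1
    (List.pairwise_append.1 (List.pairwise_append.1 h).1).2.1).2
  rw [List.pairwise_ofFn] at hblocks
  have hmem (j : Fin n) : d j.castSucc ∈ blockRange d j := by
    have := hd j.castSucc_lt_succ
    simp only [blockRange, List.mem_range']
    exact ⟨0, by omega, by omega⟩
  refine Equiv.Perm.eq_one_of_strictMono fun i j hij => ?_
  exact Fin.castSucc_lt_castSucc_iff.1
    (hd.lt_iff_lt.1 (hblocks hij _ (hmem (σ i)) _ (hmem (σ j))))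

theorem prod_map_permuteBlocks {M : Type*} [Monoid M] (g : ℕ → M) {K : ℕ}
    {d : Fin (n + 1) → ℕ} {σ : Equiv.Perm (Fin n)}
    (hσ : (List.ofFn fun j => ((blockRange d j).map g).prod).prod =
      (List.ofFn fun j => ((blockRange d (σ j)).map g).prod).prod) :
    ((permuteBlocks K d σ).map g).prod = ((permuteBlocks K d 1).map g).prod := by
  simp [permuteBlocks, List.map_flatten, List.prod_flatten, List.map_ofFn, Function.comp_def, hσ]

end PermuteBlocks

namespace LangL1

theorem head?_ne_one_of_mem_kstar {w : List (Fin 2)} (hw : w ∈ KStar.kstar LangL1) :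
    w.head? ≠ some 1 := by
  obtain ⟨L, rfl, hL⟩ := Language.mem_kstar.1 hw
  rcases L with _ | ⟨y, L⟩
  · simp
  · obtain ⟨k, hk, rfl⟩ := hL y List.mem_cons_self
    obtain ⟨k, rfl⟩ := Nat.exists_eq_add_of_le' hk
    simp [List.replicate_succ]

theorem replicate_append_replicate_append_mem_kstar_iff {p q : ℕ} {u : List (Fin 2)}
    (hu : u.head? ≠ some 1) :
    List.replicate (p + 1) 0 ++ (List.replicate (q + 1) 1 ++ u) ∈ KStar.kstar LangL1 ↔
      p = q ∧ u ∈ KStar.kstar LangL1 := by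
  constructor
  · intro h
    obtain ⟨_ | ⟨y, L⟩, hw, hL⟩ := Language.mem_kstar.1 h
    · simp at hw
    obtain ⟨k, hk, rfl⟩ := hL y List.mem_cons_self
    obtain ⟨k, rfl⟩ := Nat.exists_eq_add_of_le' hk
    have hrest : L.flatten ∈ KStar.kstar LangL1 :=
      Language.join_mem_kstar fun z hz => hL z (List.mem_cons_of_mem _ hz)
    rw [List.flatten_cons, List.append_assoc] at hw
    obtain ⟨hkp, hw⟩ := List.replicate_append_inj (by simp [List.replicate_succ])
      (by simp [List.replicate_succ]) hw
    obtain ⟨hkq, rfl⟩ := List.replicate_append_inj hu (head?_ne_one_of_mem_kstar hrest) hw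
    exact ⟨by omega, hrest⟩
  · rintro ⟨rfl, hu⟩
    obtain ⟨L, rfl, hL⟩ := Language.mem_kstar.1 hu
    have hblock : List.replicate (p + 1) 0 ++ List.replicate (p + 1) 1 ∈ LangL1 :=
      ⟨p + 1, by omega, rfl⟩
    simpa using Language.join_mem_kstar (L := _ :: L) (List.forall_mem_cons.2 ⟨hblock, hL⟩)

-- `a · bridge 0 ⋯ bridge (K - 1) · b^{K+1} = a¹b¹a²b²⋯a^{K+1}b^{K+1}`
def bridge (t : ℕ) : List (Fin 2) := List.replicate (t + 1) 1 ++ List.replicate (t + 2) 0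

theorem replicate_append_flatten_bridge_mem_kstar_iff {s t : ℕ} {ts : List ℕ}
    {v : List (Fin 2)} :
    List.replicate (s + 1) 0 ++ (((t :: ts).map bridge).flatten ++ v) ∈ KStar.kstar LangL1 ↔
      s = t ∧ List.replicate (t + 1 + 1) 0 ++ ((ts.map bridge).flatten ++ v) ∈
        KStar.kstar LangL1 := by
  rw [List.map_cons, List.flatten_cons, bridge, List.append_assoc, List.append_assoc,
    replicate_append_replicate_append_mem_kstar_iff (by simp [List.replicate_succ])]

theorem mem_kstar_of_range' (s k : ℕ) :
    List.replicate (s + 1) 0 ++ (((List.range' s k).map bridge).flatten ++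
      List.replicate (s + k + 1) 1) ∈ KStar.kstar LangL1 := by
  induction k generalizing s with
  | zero =>
    simpa using (replicate_append_replicate_append_mem_kstar_iff (u := []) (by simp)).2
      ⟨rfl, Language.nil_mem_kstar _⟩
  | succ k ih =>
    rw [List.range'_succ, replicate_append_flatten_bridge_mem_kstar_iff,
      show s + (k + 1) + 1 = s + 1 + k + 1 by omega]
    exact ⟨rfl, ih (s + 1)⟩

theorem eq_range'_of_mem_kstar {ts : List ℕ} {s : ℕ} {v : List (Fin 2)}
    (h : List.replicate (s + 1) 0 ++ ((ts.map bridge).flatten ++ v) ∈ KStar.kstar LangL1) :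
    ts = List.range' s ts.length := by
  induction ts generalizing s with
  | nil => rfl
  | cons t ts ih =>
    obtain ⟨rfl, h⟩ := replicate_append_flatten_bridge_mem_kstar_iff.1 h
    rw [ih h, List.length_cons, List.range'_succ, List.length_range']

end LangL1

namespace RatMonoidAutomaton.Reaches

variable {α M : Type} [Monoid M] {A : RatMonoidAutomaton α M}

theorem append_s6 {p q r : A.Q} {u v : List α} {m m' : M} (h : A.Reaches p u m r)
    (h' : A.Reaches r v m' q) : A.Reaches p (u ++ v) (m * m') q := by
  induction h with
  | refl => simpa using h'
  | letter hs _ ih => simpa [mul_assoc] using letter hs (ih h')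
  | eps hs _ ih => simpa [mul_assoc] using eps hs (ih h')

theorem exists_of_append_s6 {p q : A.Q} {u v : List α} {m : M} (h : A.Reaches p (u ++ v) m q) :
    ∃ r m₁ m₂, A.Reaches p u m₁ r ∧ A.Reaches r v m₂ q ∧ m = m₁ * m₂ := by
  generalize hw : u ++ v = w at h
  induction h generalizing u with
  | refl q =>
    obtain ⟨rfl, rfl⟩ := List.append_eq_nil_iff.1 hw
    exact ⟨q, 1, 1, refl q, refl q, (one_mul 1).symm⟩
  | letter hs hr ih =>
    rcases u with _ | ⟨b, u⟩
    · rw [List.nil_append] at hw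
      exact ⟨_, 1, _, refl _, hw ▸ letter hs hr, (one_mul _).symm⟩
    rw [List.cons_append, List.cons.injEq] at hw
    obtain ⟨rfl, hw⟩ := hw
    obtain ⟨r, m₁, m₂, h₁, h₂, rfl⟩ := ih hw
    exact ⟨r, _, m₂, letter hs h₁, h₂, (mul_assoc _ _ _).symm⟩
  | eps hs _ ih =>
    obtain ⟨r, m₁, m₂, h₁, h₂, rfl⟩ := ih hw
    exact ⟨r, _, m₂, eps hs h₁, h₂, (mul_assoc _ _ _).symm⟩

theorem exists_segments {f : ℕ → List α} {p q : A.Q} {u : List α} {m : M} :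
    ∀ {K : ℕ}, A.Reaches p (u ++ ((List.range' 0 K).map f).flatten) m q →
      ∃ (st : ℕ → A.Q) (g : ℕ → M) (m₀ : M), A.Reaches p u m₀ (st 0) ∧ st K = q ∧
        (∀ t < K, A.Reaches (st t) (f t) (g t) (st (t + 1))) ∧
        m = m₀ * ((List.range' 0 K).map g).prod
  | 0, h => ⟨fun _ => q, fun _ => 1, m, by simpa using h, rfl, by simp, by simp⟩
  | K + 1, h => by
    rw [List.range'_1_concat, List.map_append, List.flatten_append, ← List.append_assoc] at h
    obtain ⟨r, m₁, m₂, h₁, h₂, rfl⟩ := h.exists_of_append_s6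
    obtain ⟨st, g, m₀, h₀, rfl, hst, rfl⟩ := exists_segments h₁
    refine ⟨Function.update st (K + 1) q, Function.update g K m₂, m₀, ?_, by simp, ?_, ?_⟩
    · rwa [Function.update_of_ne (by omega)]
    · intro t ht
      rcases Nat.lt_succ_iff_lt_or_eq.1 ht with ht | rfl
      · rw [Function.update_of_ne (by omega), Function.update_of_ne (by omega),
          Function.update_of_ne (by omega)]
        exact hst t ht
      · simpa [Function.update_of_ne (Nat.succ_ne_self t).symm] using h₂
    · have hg : (List.range' 0 K).map (Function.update g K m₂) = (List.range' 0 K).map g :=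
        List.map_congr_left fun t ht =>
          Function.update_of_ne (by simp [List.mem_range'] at ht; omega) _ _
      simp [List.range'_1_concat, hg, mul_assoc]

theorem flatten_range' {f : ℕ → List α} {st : ℕ → A.Q} {g : ℕ → M} {K : ℕ}
    (hst : ∀ t < K, A.Reaches (st t) (f t) (g t) (st (t + 1))) {s l : ℕ} (hl : s + l ≤ K) :
    A.Reaches (st s) ((List.range' s l).map f).flatten ((List.range' s l).map g).prod
      (st (s + l)) := by
  induction l generalizing s with
  | zero => simpa using refl (st s)
  | succ l ih =>
    simpa [List.range'_succ, ← add_assoc, add_right_comm s 1 l] using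
      (hst s (by omega)).append_s6 (ih (s := s + 1) (by omega))

theorem flatten_of_loops {f : ℕ → List α} {g : ℕ → M} {y : A.Q} {L : List (List ℕ)}
    (h : ∀ l ∈ L, A.Reaches y (l.map f).flatten (l.map g).prod y) :
    A.Reaches y (L.flatten.map f).flatten (L.flatten.map g).prod y := by
  induction L with
  | nil => exact refl y
  | cons l L ih =>
    simpa using
      (h l List.mem_cons_self).append_s6 (ih fun l' hl' => h l' (List.mem_cons_of_mem _ hl'))

theorem flatten_permuteBlocks {n : ℕ} {f : ℕ → List α} {st : ℕ → A.Q} {g : ℕ → M} {K : ℕ}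
    (hst : ∀ t < K, A.Reaches (st t) (f t) (g t) (st (t + 1))) {d : Fin (n + 1) → ℕ}
    (hd : Monotone d) (hdK : d (Fin.last n) ≤ K) {y : A.Q} (hy : ∀ j, st (d j) = y)
    (σ : Equiv.Perm (Fin n)) :
    A.Reaches (st 0) ((permuteBlocks K d σ).map f).flatten ((permuteBlocks K d σ).map g).prod
      (st K) := by
  have h0 := hd (Fin.zero_le (Fin.last n))
  have hhead := flatten_range' hst (s := 0) (l := d 0) (by omega)
  have htail := flatten_range' hst (s := d (Fin.last n)) (l := K - d (Fin.last n)) (by omega)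
  have hloops := flatten_of_loops (f := f) (g := g) (y := y) (L := List.ofFn (blockRange d ∘ σ))
    fun l hl => by
      obtain ⟨j, rfl⟩ := List.mem_ofFn.1 hl
      have hj := hd (σ j).castSucc_lt_succ.le
      have := flatten_range' hst (s := d (σ j).castSucc)
        (l := d (σ j).succ - d (σ j).castSucc) (by have := hd (σ j).succ.le_last; omega)
      rwa [Nat.add_sub_cancel' hj, hy, hy] at this
  rw [zero_add, hy] at hhead
  rw [Nat.add_sub_cancel' hdK, hy] at htail
  simpa [permuteBlocks, mul_assoc] using hhead.append_s6 (hloops.append_s6 htail)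

theorem exists_permuteBlocks [Fintype A.Q] {n K : ℕ} (hM : NPermutable M n)
    (hK : Fintype.card A.Q * n < K + 1) {f : ℕ → List α} {p q : A.Q} {u v : List α} {m : M}
    (h : A.Reaches p (u ++ (((List.range' 0 K).map f).flatten ++ v)) m q) :
    ∃ (d : Fin (n + 1) → ℕ) (σ : Equiv.Perm (Fin n)), StrictMono d ∧ σ ≠ 1 ∧
      A.Reaches p (u ++ (((permuteBlocks K d σ).map f).flatten ++ v)) m q := by
  rw [← List.append_assoc] at h
  obtain ⟨r, m₁, m₂, h₁, h₂, rfl⟩ := h.exists_of_append_s6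
  obtain ⟨st, g, m₀, h₀, rfl, hst, rfl⟩ := h₁.exists_segments
  obtain ⟨y, d, hd, hdK, hy⟩ := exists_strictMono_fin_of_card_mul_lt st hK
  obtain ⟨σ, hσ, hprod⟩ := hM fun j => ((blockRange d j).map g).prod
  refine ⟨d, σ, hd, hσ, ?_⟩
  have hrun := h₀.append_s6 ((flatten_permuteBlocks hst hd.monotone (hdK _) hy σ).append_s6 h₂)
  rwa [prod_map_permuteBlocks g hprod, permuteBlocks_one hd.monotone (hdK _), ← mul_assoc]
    at hrun

end RatMonoidAutomaton.Reaches

theorem L1_star_not_mem_LRat_general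
    (M : Type) [Monoid M] (hperm : Permutable M) :
    KStar.kstar LangL1 ∉ LRat (Fin 2) M := by
  rintro ⟨A, hA⟩
  obtain ⟨n, -, hn⟩ := hperm
  let := A.fintypeQ
  set K := Fintype.card A.Q * n
  obtain ⟨q, hq, m, hrun, hacc⟩ : List.replicate (0 + 1) 0 ++
      (((List.range' 0 K).map LangL1.bridge).flatten ++ List.replicate (0 + K + 1) 1) ∈ A.lang :=
    hA ▸ LangL1.mem_kstar_of_range' 0 K
  obtain ⟨d, σ, hd, hσ, hrun'⟩ := hrun.exists_permuteBlocks hn K.lt_succ_self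
  have hmem : _ ∈ A.lang := ⟨q, hq, m, hrun', hacc⟩
  rw [hA] at hmem
  refine hσ (eq_one_of_pairwise_permuteBlocks (K := K) hd ?_)
  rw [LangL1.eq_range'_of_mem_kstar hmem]
  exact List.pairwise_lt_range'

/-- Let `M` be a finitely generated permutable monoid. Then the language
`L₁* = {aⁿbⁿ : n ≥ 1}*` does not belong to `𝔏_Rat(M)`. -/
theorem L1_star_not_mem_LRat
    (M : Type) [Monoid M] (hfg : Monoid.FG M) (hperm : Permutable M) :
    KStar.kstar LangL1 ∉ LRat (Fin 2) M :=
  L1_star_not_mem_LRat_general M hperm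
end

section
/- Let I be a proper ideal of a monoid M. Then the family of languages generated by context-free valence grammars over M equals the family generated by context-free valence grammars over the Rees quotient M/I: 𝔏(Val,CF,M) = 𝔏(Val,CF,M/I). -/
/-- A context-free valence grammar over a monoid `M` with terminal alphabet `T`:
a context-free grammar (finitely many nonterminals, finitely many rules) each of whose
rules `(A, α, m)` rewrites the nonterminal `A` to the string `α ∈ (N ∪ T)*` and carries
the valence `m ∈ M`. -/
structure CFValenceGrammar (T : Type) (M : Type) [Monoid M] where
  NT : Type
  fintypeNT : Fintype NT
  start : NT
  rules : List (NT × List (NT ⊕ T) × M)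

namespace CFValenceGrammar

variable {T M : Type} [Monoid M]

/-- One derivation step on pairs (sentential form, accumulated valence). -/
def Produces (G : CFValenceGrammar T M)
    (x y : List (G.NT ⊕ T) × M) : Prop :=
  ∃ r ∈ G.rules, ∃ u v : List (G.NT ⊕ T),
    x.1 = u ++ Sum.inl r.1 :: v ∧ y.1 = u ++ r.2.1 ++ v ∧ y.2 = x.2 * r.2.2

/-- The derivation relation: the reflexive-transitive closure of `Produces`. -/
def Derives (G : CFValenceGrammar T M) :
    List (G.NT ⊕ T) × M → List (G.NT ⊕ T) × M → Prop :=
  Relation.ReflTransGen G.Produces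

/-- The language generated by a context-free valence grammar: terminal words derivable
from the start symbol by a valid derivation, i.e. one whose product of valences is the
identity. -/
def lang (G : CFValenceGrammar T M) : Language T :=
  { w | G.Derives ([Sum.inl G.start], 1) (w.map Sum.inr, 1) }

end CFValenceGrammar

/-- `𝔏(Val, CF, M)`: the family of languages over the terminal alphabet `T` generated by
context-free valence grammars over `M`. -/
def LValCF (T : Type) (M : Type) [Monoid M] : Set (Language T) :=
  { L | ∃ G : CFValenceGrammar T M, G.lang = L }

/-- The Rees congruence `ρ_I` associated with an ideal `I` of `M`:
`a ρ_I b` iff `a = b` or both `a, b ∈ I`.  The Rees quotient `M/I` is the quotient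
monoid `(reesCon I hI).Quotient`. -/
def reesCon {M : Type} [Monoid M] (I : Set M)
    (hI : ∀ a ∈ I, ∀ x y : M, x * a * y ∈ I) : Con M where
  r a b := a = b ∨ (a ∈ I ∧ b ∈ I)
  iseqv := by
    refine ⟨fun a => Or.inl rfl, ?_, ?_⟩
    · rintro a b (rfl | h)
      · exact Or.inl rfl
      · exact Or.inr ⟨h.2, h.1⟩
    · rintro a b c (rfl | h1) h2
      · exact h2
      · rcases h2 with rfl | h2
        · exact Or.inr h1
        · exact Or.inr ⟨h1.1, h2.2⟩
  mul' := by
    rintro w x y z (rfl | h1) (rfl | h2)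
    · exact Or.inl rfl
    · exact Or.inr ⟨by simpa using hI y h2.1 w 1, by simpa using hI z h2.2 w 1⟩
    · exact Or.inr ⟨by simpa using hI w h1.1 1 y, by simpa using hI x h1.2 1 y⟩
    · exact Or.inr ⟨by simpa using hI w h1.1 1 y, by simpa using hI x h1.2 1 z⟩

namespace CFValenceGrammar

variable {T M N P : Type} [Monoid M] [Monoid N] [Monoid P]

def map (f : M → N) (G : CFValenceGrammar T M) : CFValenceGrammar T N where
  NT := G.NT
  fintypeNT := G.fintypeNT
  start := G.start
  rules := G.rules.map fun r => (r.1, r.2.1, f r.2.2)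

@[simp]
theorem map_id (G : CFValenceGrammar T M) : G.map id = G := by
  cases G
  simp [map]

theorem map_map (f : N → P) (g : M → N) (G : CFValenceGrammar T M) :
    (G.map g).map f = G.map (f ∘ g) := by
  simp [map, Function.comp_def]

theorem Produces.map (f : M →* N) {G : CFValenceGrammar T M}
    {x y : List (G.NT ⊕ T) × M} (h : G.Produces x y) :
    (G.map f).Produces (x.1, f x.2) (y.1, f y.2) := by
  obtain ⟨r, hr, u, v, hx, hy, hval⟩ := h
  exact ⟨(r.1, r.2.1, f r.2.2), List.mem_map_of_mem hr, u, v, hx, hy, by simp [hval]⟩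

theorem Derives.map (f : M →* N) {G : CFValenceGrammar T M}
    {x y : List (G.NT ⊕ T) × M} (h : G.Derives x y) :
    (G.map f).Derives (x.1, f x.2) (y.1, f y.2) := by
  induction h with
  | refl => exact .refl
  | tail _ hstep ih => exact ih.tail (hstep.map f)

theorem Derives.exists_of_map (f : M →* N) {G : CFValenceGrammar T M}
    {x y : List (G.NT ⊕ T) × N} (h : (G.map f).Derives x y) {m : M} (hm : f m = x.2) :
    ∃ m', f m' = y.2 ∧ G.Derives (x.1, m) (y.1, m') := by
  induction h with
  | refl => exact ⟨m, hm, .refl⟩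
  | tail _ hstep ih =>
    obtain ⟨m', hm', hd⟩ := ih
    obtain ⟨r, hr, u, v, hx, hy, hval⟩ := hstep
    obtain ⟨r₀, hr₀, rfl⟩ := List.mem_map.mp hr
    exact ⟨m' * r₀.2.2, by rw [map_mul, hm', hval], hd.tail ⟨r₀, hr₀, u, v, hx, hy, rfl⟩⟩

theorem lang_map (f : M →* N) (hf : ∀ m, f m = 1 → m = 1) (G : CFValenceGrammar T M) :
    (G.map f).lang = G.lang := by
  ext w
  constructor
  · intro h
    obtain ⟨m, hm, hd⟩ := h.exists_of_map f (map_one f)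
    rwa [hf m hm] at hd
  · intro h
    have hmap := h.map f
    rwa [map_one] at hmap

end CFValenceGrammar

/-- Valence languages only see whether a product of valences is `1`, so a surjective
homomorphism with trivial "kernel" `f⁻¹(1) = {1}` preserves them. -/
theorem LValCF_eq_of_surjective {T M N : Type} [Monoid M] [Monoid N] (f : M →* N)
    (hf : ∀ m, f m = 1 → m = 1) (hsurj : Function.Surjective f) :
    LValCF T M = LValCF T N := by
  ext L
  constructor
  · rintro ⟨G, rfl⟩
    exact ⟨G.map f, G.lang_map f hf⟩
  · rintro ⟨G, rfl⟩
    obtain ⟨s, hs⟩ := hsurj.hasRightInverse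
    refine ⟨G.map s, ?_⟩
    rw [← (G.map s).lang_map f hf, CFValenceGrammar.map_map, hs.id, CFValenceGrammar.map_id]

theorem reesCon_mk'_eq_one {M : Type} [Monoid M] {I : Set M}
    {hI : ∀ a ∈ I, ∀ x y : M, x * a * y ∈ I} (h1 : (1 : M) ∉ I) {m : M}
    (hm : (reesCon I hI).mk' m = 1) : m = 1 :=
  ((reesCon I hI).eq.mp hm).resolve_right fun h => h1 h.2

/-- Let `I` be a proper ideal of a monoid `M`.  Then, over every
terminal alphabet, the family of languages generated by context-free valence grammars
over `M` equals the one generated by context-free valence grammars over the Rees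
quotient `M/I`. -/
theorem LValCF_eq_LValCF_reesQuotient
    (M : Type) [Monoid M] (I : Set M)
    (hI : ∀ a ∈ I, ∀ x y : M, x * a * y ∈ I) (hproper : I ≠ Set.univ) :
    ∀ T : Type, LValCF T M = LValCF T (reesCon I hI).Quotient := by
  intro T
  have h1 : (1 : M) ∉ I := fun h =>
    hproper (Set.eq_univ_of_forall fun x => by simpa using hI 1 h x 1)
  exact LValCF_eq_of_surjective (reesCon I hI).mk' (fun _ => reesCon_mk'_eq_one h1)
    (reesCon I hI).mk'_surjective
end
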